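/- Let N ≥ 1 and m ≥ 1, and set λ_m := j_{N/2,m}² − j_{N/2−1,1}². Suppose ℓ ≥ 1 and k ≥ 1 are integers with ℓ²λ_m = j_{N/2,m}² − j_{N/2−1,k}². Then ℓ = 1 and k = 1. -/

import Mathlib

/-!
Termwise differentiation of the series gives `r I_ν'(r) + 2ν I_ν(r) = I_{ν-1}(r)`, i.e. the
classical identity `(r^ν J_ν)' = r^ν J_{ν-1}`. For `ν = N/2 > 0`, Rolle's theorem applied to
`r^ν J_ν` on `[0, j_{ν,1}]` produces a zero of `J_{ν-1}` in `(0, j_{ν,1})`, so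
`j_{ν-1,1} < j_{ν,1} ≤ j_{ν,m}` and `λ_m > 0`. Since `j_{ν-1,k} ≥ j_{ν-1,1}`, the right-hand side
is at most `λ_m`, which forces `ℓ = 1`, and then `j_{ν-1,k} = j_{ν-1,1}` forces `k = 1`.
-/

open Real

/-- The entire function `I_ν` with `I_ν(r) = r^{−ν} J_ν(r)` for `r > 0`. -/
noncomputable def besselI (ν : ℝ) (r : ℝ) : ℝ :=
  ∑' k : ℕ, ((-1 : ℝ) ^ k / ((k.factorial : ℝ) * Real.Gamma ((k : ℝ) + ν + 1)))
    * r ^ (2 * k) / (2 : ℝ) ^ (2 * (k : ℝ) + ν)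

/-- The Bessel function of the first kind `J_ν`. -/
noncomputable def besselJ (ν : ℝ) (r : ℝ) : ℝ := r ^ ν * besselI ν r


noncomputable def besselCoeff (ν : ℝ) (k : ℕ) : ℝ :=
  (-1 : ℝ) ^ k / ((k.factorial : ℝ) * Gamma ((k : ℝ) + ν + 1)) / (2 : ℝ) ^ (2 * (k : ℝ) + ν)

lemma besselI_eq_tsum (ν r : ℝ) : besselI ν r = ∑' k : ℕ, besselCoeff ν k * r ^ (2 * k) := by
  refine tsum_congr fun k => ?_
  rw [besselCoeff]
  ring

-- Mathlib's `Gamma` vanishes at its poles, so this and the next identity hold for every `ν`.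
lemma besselCoeff_succ_mul (ν : ℝ) (k : ℕ) :
    besselCoeff ν (k + 1) * (4 * ((k : ℝ) + 1) * ((k : ℝ) + ν + 1)) = -besselCoeff ν k := by
  have hfac : ((k + 1).factorial : ℝ) = ((k : ℝ) + 1) * k.factorial := by
    push_cast [Nat.factorial_succ]; ring
  have hpow : (2 : ℝ) ^ (2 * ((k + 1 : ℕ) : ℝ) + ν) = (2 : ℝ) ^ (2 * (k : ℝ) + ν) * 4 := by
    rw [show 2 * ((k + 1 : ℕ) : ℝ) + ν = (2 * (k : ℝ) + ν) + 2 by push_cast; ring,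
      rpow_add two_pos]
    norm_num
  have harg : ((k + 1 : ℕ) : ℝ) + ν + 1 = ((k : ℝ) + ν + 1) + 1 := by push_cast; ring
  simp only [besselCoeff]
  rw [hfac, hpow, harg]
  by_cases h : (k : ℝ) + ν + 1 = 0
  · simp [h]
  rw [Gamma_add_one h]
  field_simp
  ring

lemma besselCoeff_sub_one (ν : ℝ) (k : ℕ) :
    besselCoeff (ν - 1) k = 2 * ((k : ℝ) + ν) * besselCoeff ν k := by
  have hpow : (2 : ℝ) ^ (2 * (k : ℝ) + ν) = (2 : ℝ) ^ (2 * (k : ℝ) + (ν - 1)) * 2 := by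
    rw [← rpow_add_one two_pos.ne']
    ring_nf
  simp only [besselCoeff]
  rw [show (k : ℝ) + (ν - 1) + 1 = k + ν by ring, hpow]
  by_cases h : (k : ℝ) + ν = 0
  · simp [h]
  rw [Gamma_add_one h]
  field_simp

lemma summable_succ_mul_besselCoeff_mul_pow (ν r : ℝ) :
    Summable fun k : ℕ => ((k : ℝ) + 1) * besselCoeff ν k * r ^ (2 * k) := by
  refine summable_of_ratio_norm_eventually_le (r := 1 / 2) (by norm_num) ?_
  obtain ⟨K, hK⟩ := exists_nat_ge (r ^ 2 + |ν|)
  filter_upwards [Filter.eventually_ge_atTop K] with k hk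
  have hkK : (K : ℝ) ≤ k := by exact_mod_cast hk
  have hrk : r ^ 2 ≤ k := by linarith [abs_nonneg ν]
  have hνk : 1 ≤ (k : ℝ) + ν + 1 := by linarith [neg_abs_le ν, sq_nonneg r]
  have hratio := congrArg abs (besselCoeff_succ_mul ν k)
  rw [abs_neg, abs_mul, abs_of_pos (by positivity : 0 < 4 * ((k : ℝ) + 1) * ((k : ℝ) + ν + 1))]
    at hratio
  have hpow : r ^ (2 * (k + 1)) = r ^ 2 * r ^ (2 * k) := by ring
  simp only [norm_mul, Real.norm_eq_abs, abs_pow, Nat.cast_add, Nat.cast_one, hpow]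
  rw [← hratio, abs_of_pos (by positivity : (0 : ℝ) < k + 1 + 1),
    abs_of_pos (by positivity : (0 : ℝ) < k + 1), sq_abs]
  have key : ((k : ℝ) + 1 + 1) * r ^ 2 ≤ 2 * ((k : ℝ) + 1) ^ 2 * ((k : ℝ) + ν + 1) := by
    nlinarith [sq_nonneg r]
  have hA : 0 ≤ |besselCoeff ν (k + 1)| * |r| ^ (2 * k) := by positivity
  calc (k + 1 + 1) * |besselCoeff ν (k + 1)| * (r ^ 2 * |r| ^ (2 * k))
      = ((k + 1 + 1) * r ^ 2) * (|besselCoeff ν (k + 1)| * |r| ^ (2 * k)) := by ring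
    _ ≤ (2 * (k + 1) ^ 2 * (k + ν + 1)) * (|besselCoeff ν (k + 1)| * |r| ^ (2 * k)) :=
        mul_le_mul_of_nonneg_right key hA
    _ = 1 / 2 * ((k + 1) * (|besselCoeff ν (k + 1)| * (4 * (k + 1) * (k + ν + 1)))
          * |r| ^ (2 * k)) := by ring

lemma summable_besselCoeff_mul_pow (ν r : ℝ) :
    Summable fun k : ℕ => besselCoeff ν k * r ^ (2 * k) := by
  refine (summable_succ_mul_besselCoeff_mul_pow ν r).abs.of_norm_bounded fun k => ?_
  rw [Real.norm_eq_abs, mul_assoc, abs_mul (_ + 1), abs_of_pos (by positivity : (0 : ℝ) < k + 1)]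
  exact le_mul_of_one_le_left (abs_nonneg _) (by linarith [k.cast_nonneg (α := ℝ)])

lemma hasDerivAt_besselI (ν r : ℝ) :
    HasDerivAt (besselI ν) (∑' k : ℕ, besselCoeff ν k * (2 * k * r ^ (2 * k - 1))) r := by
  set R := |r| + 1
  have hR : 1 ≤ R := by simp [R]
  rw [show besselI ν = fun z => ∑' k : ℕ, besselCoeff ν k * z ^ (2 * k) from
    funext (besselI_eq_tsum ν)]
  refine hasDerivAt_tsum_of_isPreconnected
    ((summable_succ_mul_besselCoeff_mul_pow ν R).abs.mul_left 2) isOpen_Ioo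
    (convex_Ioo (-R) R).isPreconnected (g := fun k z => besselCoeff ν k * z ^ (2 * k))
    (g' := fun k z => besselCoeff ν k * (2 * k * z ^ (2 * k - 1))) (fun k y _ => ?_)
    (fun k y hy => ?_) (y₀ := r) ?_ (summable_besselCoeff_mul_pow ν r) ?_
  · simpa using (hasDerivAt_pow (2 * k) y).const_mul (besselCoeff ν k)
  · have hyR : |y| ≤ R := abs_le.2 ⟨hy.1.le, hy.2.le⟩
    have hpow : |y| ^ (2 * k - 1) ≤ R ^ (2 * k) :=
      (pow_le_pow_left₀ (abs_nonneg y) hyR _).trans (pow_le_pow_right₀ hR (Nat.sub_le _ _))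
    simp only [Real.norm_eq_abs, abs_mul, abs_pow, abs_two, Nat.abs_cast]
    rw [abs_of_pos (by positivity : (0 : ℝ) < k + 1), abs_of_nonneg (by positivity : (0 : ℝ) ≤ R)]
    have hk : (k : ℝ) ≤ k + 1 := by linarith
    calc |besselCoeff ν k| * (2 * k * |y| ^ (2 * k - 1))
        ≤ |besselCoeff ν k| * (2 * (k + 1) * R ^ (2 * k)) := by gcongr
      _ = 2 * ((k + 1) * |besselCoeff ν k| * R ^ (2 * k)) := by ring
  all_goals exact ⟨by linarith [neg_abs_le r], by linarith [le_abs_self r]⟩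

lemma mul_deriv_besselI (ν r : ℝ) :
    r * deriv (besselI ν) r = besselI (ν - 1) r - 2 * ν * besselI ν r := by
  have hterm : ∀ k : ℕ, r * (besselCoeff ν k * (2 * k * r ^ (2 * k - 1)))
      = besselCoeff (ν - 1) k * r ^ (2 * k) - 2 * ν * (besselCoeff ν k * r ^ (2 * k)) := by
    intro k
    rw [besselCoeff_sub_one]
    rcases k with _ | k
    · simp
    · rw [show 2 * (k + 1) = (2 * k + 1) + 1 by ring, Nat.add_sub_cancel, pow_succ]
      ring
  rw [(hasDerivAt_besselI ν r).deriv, ← tsum_mul_left, tsum_congr hterm,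
    (summable_besselCoeff_mul_pow (ν - 1) r).tsum_sub
      ((summable_besselCoeff_mul_pow ν r).mul_left _),
    tsum_mul_left, besselI_eq_tsum, besselI_eq_tsum]

lemma continuous_besselI (ν : ℝ) : Continuous (besselI ν) :=
  continuous_iff_continuousAt.2 fun r => (hasDerivAt_besselI ν r).continuousAt

lemma hasDerivAt_rpow_mul_besselJ (ν : ℝ) {r : ℝ} (hr : 0 < r) :
    HasDerivAt (fun s => s ^ ν * besselJ ν s) (r ^ ν * besselJ (ν - 1) r) r := by
  have hpow := Real.hasDerivAt_rpow_const (p := ν) (Or.inl hr.ne')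
  have h : HasDerivAt (fun s => s ^ ν * (s ^ ν * besselI ν s)) (ν * r ^ (ν - 1) * (r ^ ν *
      besselI ν r) + r ^ ν * (ν * r ^ (ν - 1) * besselI ν r + r ^ ν * deriv (besselI ν) r)) r :=
    hpow.mul (hpow.mul (hasDerivAt_besselI ν r).differentiableAt.hasDerivAt)
  refine h.congr_deriv ?_
  have hI := mul_deriv_besselI ν r
  rw [besselJ, rpow_sub_one hr.ne']
  field_simp
  linear_combination hI

lemma exists_besselJ_sub_one_eq_zero {ν a : ℝ} (hν : 0 < ν) (ha : 0 < a)
    (hJ : besselJ ν a = 0) : ∃ c ∈ Set.Ioo 0 a, besselJ (ν - 1) c = 0 := by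
  have hcont : Continuous fun s => s ^ ν * besselJ ν s := by
    have := Real.continuous_rpow_const hν.le
    have := continuous_besselI ν
    unfold besselJ
    fun_prop
  obtain ⟨c, hc, hc0⟩ := exists_hasDerivAt_eq_zero ha hcont.continuousOn
    (by simp [zero_rpow hν.ne', hJ]) fun x hx => hasDerivAt_rpow_mul_besselJ ν hx.1
  exact ⟨c, hc, (mul_eq_zero.1 hc0).resolve_left (rpow_pos_of_pos hc.1 ν).ne'⟩

/-- Let `N ≥ 1`, `m ≥ 1` and `λ_m := j_{N/2,m}² − j_{N/2−1,1}²`. If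
`ℓ, k ≥ 1` are integers with `ℓ² λ_m = j_{N/2,m}² − j_{N/2−1,k}²`, then `ℓ = 1` and `k = 1`. -/
theorem kernel_mode_uniqueness
    (j : ℝ → ℕ → ℝ)
    (hpos : ∀ μ : ℝ, -1 < μ → ∀ n : ℕ, 1 ≤ n → 0 < j μ n)
    (hzero : ∀ μ : ℝ, -1 < μ → ∀ n : ℕ, 1 ≤ n → besselJ μ (j μ n) = 0)
    (hmono : ∀ μ : ℝ, -1 < μ → ∀ n m : ℕ, 1 ≤ n → n < m → j μ n < j μ m)
    (hall : ∀ μ : ℝ, -1 < μ → ∀ r : ℝ, 0 < r → besselJ μ r = 0 → ∃ n : ℕ, 1 ≤ n ∧ j μ n = r)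
    (N m : ℕ) (hN : 1 ≤ N) (hm : 1 ≤ m)
    (lamm : ℝ) (hlamm : lamm = (j ((N : ℝ) / 2) m) ^ 2 - (j ((N : ℝ) / 2 - 1) 1) ^ 2)
    (ℓ k : ℕ) (hℓ : 1 ≤ ℓ) (hk : 1 ≤ k)
    (heq : (ℓ : ℝ) ^ 2 * lamm = (j ((N : ℝ) / 2) m) ^ 2 - (j ((N : ℝ) / 2 - 1) k) ^ 2) :
    ℓ = 1 ∧ k = 1 := by
  set ν : ℝ := (N : ℝ) / 2
  have hν : 0 < ν := div_pos (Nat.cast_pos.2 hN) two_pos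
  have hμ : -1 < ν - 1 := by linarith
  have hfirst : ∀ μ, -1 < μ → ∀ n, 1 ≤ n → j μ 1 ≤ j μ n := fun μ hμ n hn =>
    hn.eq_or_lt.elim (fun h => h ▸ le_rfl) fun h => (hmono μ hμ 1 n le_rfl h).le
  obtain ⟨c, ⟨hc0, hca⟩, hc⟩ := exists_besselJ_sub_one_eq_zero hν
    (hpos ν (by linarith) 1 le_rfl) (hzero ν (by linarith) 1 le_rfl)
  obtain ⟨n, hn, rfl⟩ := hall (ν - 1) hμ c hc0 hc
  have hinterlace : j (ν - 1) 1 < j ν m :=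
    (hfirst _ hμ n hn).trans_lt (hca.trans_le (hfirst ν (by linarith) m hm))
  have hj1 := hpos (ν - 1) hμ 1 le_rfl
  have hlam : 0 < lamm := hlamm ▸ sub_pos.2 (pow_lt_pow_left₀ hinterlace hj1.le two_ne_zero)
  have hjk : j (ν - 1) 1 ^ 2 ≤ j (ν - 1) k ^ 2 := pow_le_pow_left₀ hj1.le (hfirst _ hμ k hk) 2
  have hℓ1 : ℓ = 1 := by
    have : (ℓ : ℝ) ^ 2 ≤ 1 := le_of_mul_le_mul_right (by linarith) hlam
    exact le_antisymm (by exact_mod_cast (sq_le_one_iff₀ (by positivity)).1 this) hℓ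
  subst hℓ1
  refine ⟨rfl, ?_⟩
  by_contra hk1
  have := pow_lt_pow_left₀ (hmono (ν - 1) hμ 1 k le_rfl (by omega)) hj1.le two_ne_zero
  simp only [Nat.cast_one, one_pow, one_mul] at heq
  linarith
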